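/- (Product rule for affine semidefinite programs with positive semidefinite objective; dual form of Theorem 1, item 1.) For i ∈ {1,2}, let J_i be a positive semidefinite real matrix, let A_{i,1},…,A_{i,m_i} be real matrices of the same size as J_i, and let b_i ∈ ℝ^{m_i}. Suppose y_i ∈ ℝ^{m_i} satisfies Σ_j y_i[j]·A_{i,j} − J_i ⪰ 0 for i ∈ {1,2}. Then Σ_{j,j'} y_1[j]·y_2[j']·(A_{1,j} ⊗ A_{2,j'}) − J_1 ⊗ J_2 is positive semidefinite; consequently, for every positive semidefinite X with (A_{1,j} ⊗ A_{2,j'}) • X = b_1[j]·b_2[j'] for all j,j', one has (J_1 ⊗ J_2) • X ≤ (y_1ᵀb_1)·(y_2ᵀb_2). -/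

import Mathlib

open Matrix Kronecker BigOperators

/-! With `Sᵢ = ∑ⱼ yᵢ[j] • Aᵢⱼ`, the dual slack of the product program splits as
`S₁ ⊗ S₂ - J₁ ⊗ J₂ = (S₁ - J₁) ⊗ S₂ + J₁ ⊗ (S₂ - J₂)`, a sum of Kronecker products of
positive semidefinite matrices. Pairing it with a feasible `X ⪰ 0` gives weak duality, and the
product constraints make `(S₁ ⊗ S₂) • X` the product of the two dual objectives. -/

/-- Frobenius inner product of two real matrices. -/
def frob {α β : Type*} [Fintype α] [Fintype β] (A X : Matrix α β ℝ) : ℝ :=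
  ∑ i, ∑ j, A i j * X i j

section Frobenius

variable {α β : Type*} [Fintype α] [Fintype β]

lemma frob_sub (A B X : Matrix α β ℝ) : frob (A - B) X = frob A X - frob B X := by
  simp only [frob, Matrix.sub_apply, sub_mul, Finset.sum_sub_distrib]

lemma frob_smul (c : ℝ) (A X : Matrix α β ℝ) : frob (c • A) X = c * frob A X := by
  simp only [frob, Matrix.smul_apply, smul_eq_mul, Finset.mul_sum, mul_assoc]

lemma frob_sum {ι : Type*} (s : Finset ι) (A : ι → Matrix α β ℝ) (X : Matrix α β ℝ) :
    frob (∑ k ∈ s, A k) X = ∑ k ∈ s, frob (A k) X := by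
  simp only [frob, Matrix.sum_apply, Finset.sum_mul]
  calc _ = ∑ i, ∑ k ∈ s, ∑ j, A k i j * X i j := Finset.sum_congr rfl fun _ _ => Finset.sum_comm
    _ = _ := Finset.sum_comm

end Frobenius

section PSD

variable {n : Type*} [Fintype n]

/-- By the Schur product theorem, since `frob A X = 1 ⬝ᵥ (A ⊙ X) *ᵥ 1`. -/
lemma frob_nonneg_of_posSemidef {A X : Matrix n n ℝ} (hA : A.PosSemidef) (hX : X.PosSemidef) :
    0 ≤ frob A X := by
  have h := (hA.hadamard hX).dotProduct_mulVec_nonneg (fun _ => 1)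
  simpa [frob, dotProduct, mulVec, hadamard_apply] using h

lemma frob_le_frob_of_posSemidef_sub {J S X : Matrix n n ℝ} (hSJ : (S - J).PosSemidef)
    (hX : X.PosSemidef) : frob J X ≤ frob S X := by
  have := frob_nonneg_of_posSemidef hSJ hX
  rw [frob_sub] at this
  linarith

end PSD

lemma sum_smul_kronecker_sum_smul {R ι κ l m p q : Type*} [CommSemiring R]
    (s : Finset ι) (t : Finset κ) (x : ι → R) (y : κ → R)
    (A : ι → Matrix l m R) (B : κ → Matrix p q R) :
    (∑ j ∈ s, x j • A j) ⊗ₖ (∑ k ∈ t, y k • B k) =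
      ∑ j ∈ s, ∑ k ∈ t, (x j * y k) • (A j ⊗ₖ B k) := by
  ext ⟨i, k⟩ ⟨i', k'⟩
  simp only [Matrix.sum_apply, Matrix.smul_apply, kroneckerMap_apply, smul_eq_mul,
    Finset.sum_mul_sum]
  exact Finset.sum_congr rfl fun _ _ => Finset.sum_congr rfl fun _ _ => by ring

open scoped ComplexOrder in
lemma posSemidef_kronecker_sub_kronecker {𝕜 n₁ n₂ : Type*} [RCLike 𝕜] [Finite n₁] [Finite n₂]
    {S₁ J₁ : Matrix n₁ n₁ 𝕜} {S₂ J₂ : Matrix n₂ n₂ 𝕜} (hJ₁ : J₁.PosSemidef) (hJ₂ : J₂.PosSemidef)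
    (h₁ : (S₁ - J₁).PosSemidef) (h₂ : (S₂ - J₂).PosSemidef) :
    (S₁ ⊗ₖ S₂ - J₁ ⊗ₖ J₂).PosSemidef := by
  have hS₂ : S₂.PosSemidef := by simpa using h₂.add hJ₂
  have hsplit : S₁ ⊗ₖ S₂ - J₁ ⊗ₖ J₂ = (S₁ - J₁) ⊗ₖ S₂ + J₁ ⊗ₖ (S₂ - J₂) := by
    refine (eq_sub_of_add_eq ?_).symm
    rw [add_assoc, ← kronecker_add, sub_add_cancel, ← add_kronecker, sub_add_cancel]
  rw [hsplit]
  exact (h₁.kronecker hS₂).add (hJ₁.kronecker h₂)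

theorem stmt_6_general {n1 n2 : Type*} [Fintype n1] [Fintype n2]
    {m1 m2 : ℕ}
    (J1 : Matrix n1 n1 ℝ) (J2 : Matrix n2 n2 ℝ)
    (hJ1 : J1.PosSemidef) (hJ2 : J2.PosSemidef)
    (A1 : Fin m1 → Matrix n1 n1 ℝ) (A2 : Fin m2 → Matrix n2 n2 ℝ)
    (b1 : Fin m1 → ℝ) (b2 : Fin m2 → ℝ)
    (y1 : Fin m1 → ℝ) (y2 : Fin m2 → ℝ)
    (h1 : ((∑ j, y1 j • A1 j) - J1).PosSemidef)
    (h2 : ((∑ j, y2 j • A2 j) - J2).PosSemidef) :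
    ((∑ j, ∑ j', (y1 j * y2 j') • (A1 j ⊗ₖ A2 j')) - J1 ⊗ₖ J2).PosSemidef ∧
    ∀ X : Matrix (n1 × n2) (n1 × n2) ℝ, X.PosSemidef →
      (∀ j j', frob (A1 j ⊗ₖ A2 j') X = b1 j * b2 j') →
      frob (J1 ⊗ₖ J2) X ≤ (∑ j, y1 j * b1 j) * (∑ j, y2 j * b2 j) := by
  rw [← sum_smul_kronecker_sum_smul]
  have hdual := posSemidef_kronecker_sub_kronecker hJ1 hJ2 h1 h2
  refine ⟨hdual, fun X hX hX_feasible => ?_⟩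
  calc frob (J1 ⊗ₖ J2) X ≤ frob ((∑ j, y1 j • A1 j) ⊗ₖ (∑ j, y2 j • A2 j)) X :=
        frob_le_frob_of_posSemidef_sub hdual hX
    _ = (∑ j, y1 j * b1 j) * (∑ j, y2 j * b2 j) := by
        simp only [sum_smul_kronecker_sum_smul, frob_sum, frob_smul, hX_feasible,
          Finset.sum_mul_sum]
        exact Finset.sum_congr rfl fun _ _ => Finset.sum_congr rfl fun _ _ => by ring

theorem stmt_6 {n1 n2 : Type*} [Fintype n1] [Fintype n2] [DecidableEq n1] [DecidableEq n2]
    {m1 m2 : ℕ}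
    (J1 : Matrix n1 n1 ℝ) (J2 : Matrix n2 n2 ℝ)
    (hJ1 : J1.PosSemidef) (hJ2 : J2.PosSemidef)
    (A1 : Fin m1 → Matrix n1 n1 ℝ) (A2 : Fin m2 → Matrix n2 n2 ℝ)
    (b1 : Fin m1 → ℝ) (b2 : Fin m2 → ℝ)
    (y1 : Fin m1 → ℝ) (y2 : Fin m2 → ℝ)
    (h1 : ((∑ j, y1 j • A1 j) - J1).PosSemidef)
    (h2 : ((∑ j, y2 j • A2 j) - J2).PosSemidef) :
    ((∑ j, ∑ j', (y1 j * y2 j') • (A1 j ⊗ₖ A2 j')) - J1 ⊗ₖ J2).PosSemidef ∧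
    ∀ X : Matrix (n1 × n2) (n1 × n2) ℝ, X.PosSemidef →
      (∀ j j', frob (A1 j ⊗ₖ A2 j') X = b1 j * b2 j') →
      frob (J1 ⊗ₖ J2) X ≤ (∑ j, y1 j * b1 j) * (∑ j, y2 j * b2 j) :=
  stmt_6_general J1 J2 hJ1 hJ2 A1 A2 b1 b2 y1 y2 h1 h2
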